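/- Let G be a relevant position of the game influence. For every y ∈ R(G) and every i ∈ {1,2}, s^L_i(G) ≥ s^L_i(G_y); similarly, for every x ∈ L(G) and every i ∈ {1,2}, s^R_i(G) ≥ s^R_i(G_x). -/

import Mathlib

namespace Influence

open Finset

/-- A position of the game `influence`: a finite directed graph with vertex set `V`,
arc set `A`, and the set `left` of Left (black) vertices; Right's vertices are `V \ left`. -/
structure Pos (α : Type) [DecidableEq α] where
  V : Finset α
  A : Finset (α × α)
  left : Finset α

variable {α : Type} [DecidableEq α]

namespace Pos

/-- The set of Right vertices. -/
def R (G : Pos α) : Finset α := G.V \ G.left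

/-- Well-formedness: arcs join vertices, and Left vertices are vertices. -/
def WF (G : Pos α) : Prop :=
  (∀ p ∈ G.A, p.1 ∈ G.V ∧ p.2 ∈ G.V) ∧ G.left ⊆ G.V

open Classical in
/-- `Succ G x`: vertices reachable from `x` by a directed path (including `x` itself). -/
noncomputable def Succ (G : Pos α) (x : α) : Finset α :=
  G.V.filter (fun z => Relation.ReflTransGen (fun a b => (a, b) ∈ G.A) x z)

open Classical in
/-- `Pred G y`: vertices from which `y` is reachable by a directed path (including `y`). -/
noncomputable def Pred (G : Pos α) (y : α) : Finset α :=
  G.V.filter (fun z => Relation.ReflTransGen (fun a b => (a, b) ∈ G.A) z y)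

open Classical in
noncomputable def ForcL (G : Pos α) : Finset α :=
  G.left.filter (fun x => G.Succ x ⊆ G.left)

open Classical in
noncomputable def ForcR (G : Pos α) : Finset α :=
  G.R.filter (fun y => G.Pred y ⊆ G.R)

noncomputable def Forc (G : Pos α) : Finset α := G.ForcL ∪ G.ForcR

/-- A relevant position: no forced vertices. -/
def Relevant (G : Pos α) : Prop := G.Forc = ∅

/-- The induced subgraph `G ∖ S` on `V(G) \ S`. -/
def erase (G : Pos α) (S : Finset α) : Pos α :=
  ⟨G.V \ S, G.A.filter (fun p => p.1 ∈ G.V \ S ∧ p.2 ∈ G.V \ S), G.left \ S⟩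

open Classical in
/-- The set of vertices removed when playing `x`:  for `x ∈ L`,
`Rmv(G,x) = Succ(G,x) ∪ Forc(G ∖ Succ(G,x))`; for `y ∈ R`,
`Rmv(G,y) = Pred(G,y) ∪ Forc(G ∖ Pred(G,y))`. -/
noncomputable def Rmv (G : Pos α) (x : α) : Finset α :=
  if x ∈ G.left then G.Succ x ∪ (G.erase (G.Succ x)).Forc
  else G.Pred x ∪ (G.erase (G.Pred x)).Forc

/-- The resulting relevant position `G_x` after the move `x`. -/
noncomputable def move (G : Pos α) (x : α) : Pos α := G.erase (G.Rmv x)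

mutual
/-- Auxiliary (fuel-indexed) score of Left playing first. -/
noncomputable def sL1Aux : ℕ → Pos α → ℕ
  | 0, _ => 0
  | k + 1, G =>
      if G.left.Nonempty then
        G.left.sup (fun x => (G.Rmv x).card + sL2Aux k (G.move x))
      else 0

/-- Auxiliary (fuel-indexed) score of Left playing second. -/
noncomputable def sL2Aux : ℕ → Pos α → ℕ
  | 0, _ => 0
  | k + 1, G =>
      if h : G.R.Nonempty then G.R.inf' h (fun y => sL1Aux k (G.move y))
      else 0
end

mutual
/-- Auxiliary (fuel-indexed) score of Right playing first. -/
noncomputable def sR1Aux : ℕ → Pos α → ℕ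
  | 0, _ => 0
  | k + 1, G =>
      if G.R.Nonempty then
        G.R.sup (fun y => (G.Rmv y).card + sR2Aux k (G.move y))
      else 0

/-- Auxiliary (fuel-indexed) score of Right playing second. -/
noncomputable def sR2Aux : ℕ → Pos α → ℕ
  | 0, _ => 0
  | k + 1, G =>
      if h : G.left.Nonempty then G.left.inf' h (fun x => sR1Aux k (G.move x))
      else 0
end

/-- `s^L_1(G)`: the score of Left when Left plays first (optimal play). -/
noncomputable def sL1 (G : Pos α) : ℕ := sL1Aux G.V.card G

/-- `s^L_2(G)`: the score of Left when Right plays first (optimal play). -/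
noncomputable def sL2 (G : Pos α) : ℕ := sL2Aux G.V.card G

/-- `s^R_1(G)`: the score of Right when Right plays first (optimal play). -/
noncomputable def sR1 (G : Pos α) : ℕ := sR1Aux G.V.card G

/-- `s^R_2(G)`: the score of Right when Left plays first (optimal play). -/
noncomputable def sR2 (G : Pos α) : ℕ := sR2Aux G.V.card G

/-- The Left score `Ls(G) = s^L_1(G) - s^R_2(G)`. -/
noncomputable def Ls (G : Pos α) : ℤ := (G.sL1 : ℤ) - (G.sR2 : ℤ)

/-- The Right score `Rs(G) = s^L_2(G) - s^R_1(G)`. -/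
noncomputable def Rs (G : Pos α) : ℤ := (G.sL2 : ℤ) - (G.sR1 : ℤ)

/-- Disjoint union (game sum) of two positions. -/
def union (G G' : Pos α) : Pos α := ⟨G.V ∪ G'.V, G.A ∪ G'.A, G.left ∪ G'.left⟩

/-- The empty position. -/
protected def empty : Pos α := ⟨∅, ∅, ∅⟩

end Pos

/-- The sum of a finite list of positions. -/
def sumList (l : List (Pos α)) : Pos α := l.foldr Pos.union Pos.empty

open Classical in
/-- `G` is a segment: its vertex set is a set of at least two consecutive integers,
Left's vertices are the even ones, Right's the odd ones, and there is an arc from each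
even vertex to each of its (odd) neighbours `±1` lying in the vertex set. -/
def IsSegment (G : Pos ℤ) : Prop :=
  2 ≤ G.V.card ∧
  (∀ i j k : ℤ, i ∈ G.V → j ∈ G.V → i ≤ k → k ≤ j → k ∈ G.V) ∧
  G.left = G.V.filter (fun n => Even n) ∧
  G.A = (G.V ×ˢ G.V).filter (fun p => Even p.1 ∧ (p.2 = p.1 + 1 ∨ p.2 = p.1 - 1))

/-- `G` is the finite disjoint union (game sum) of the list `l` of segments. -/
def IsSegUnion (G : Pos ℤ) (l : List (Pos ℤ)) : Prop :=
  (∀ H ∈ l, IsSegment H) ∧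
  l.Pairwise (fun H H' => Disjoint H.V H'.V) ∧
  G = sumList l


open Classical in
/-- `G` is an alternated cycle: obtained from a segment `S` with an even number of
vertices by adding the arc `(x, y)` where `x` is the endpoint of `S` in `L` (even) and
`y` the endpoint in `R` (odd). -/
def IsAltCycle (G : Pos ℤ) : Prop :=
  ∃ (S : Pos ℤ) (x y : ℤ), IsSegment S ∧ Even S.V.card ∧
    x ∈ S.V ∧ y ∈ S.V ∧ Even x ∧ ¬ Even y ∧
    (∀ z ∈ S.V, min x y ≤ z ∧ z ≤ max x y) ∧
    G.V = S.V ∧ G.left = S.left ∧ G.A = insert (x, y) S.A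

open Classical in
/-- `T` is (a copy of) the oriented tree `T_n^c`: a rooted tree of depth `n+1`, all arcs
oriented from parent to child, in which every vertex at level `k ≤ n-1` has exactly `3`
children, every vertex at level `n` has exactly `c` children, the leaves (level `n+1`)
are the Right vertices and all other vertices are Left vertices. -/
def IsTnc (n c : ℕ) (T : Pos α) : Prop :=
  T.WF ∧ ∃ lvl : α → ℕ,
    (∀ v ∈ T.V, lvl v ≤ n + 1) ∧
    T.left = T.V.filter (fun v => lvl v ≤ n) ∧
    (∃! r, r ∈ T.V ∧ lvl r = 0) ∧
    (∀ p ∈ T.A, lvl p.2 = lvl p.1 + 1) ∧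
    (∀ v ∈ T.V, 0 < lvl v → ∃! u, (u, v) ∈ T.A) ∧
    (∀ v ∈ T.V, lvl v < n → (T.V.filter (fun w => (v, w) ∈ T.A)).card = 3) ∧
    (∀ v ∈ T.V, lvl v = n → (T.V.filter (fun w => (v, w) ∈ T.A)).card = c)

/-- `J` is (a copy of) `J_n^c`, the disjoint union of two disjoint copies of `T_n^c`. -/
def IsJnc (n c : ℕ) (J : Pos α) : Prop :=
  ∃ T1 T2 : Pos α, IsTnc n c T1 ∧ IsTnc n c T2 ∧ Disjoint T1.V T2.V ∧ J = T1.union T2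

end Influence

/-!
Removing `hull B = B ∪ Forc(G ∖ B)` is the least way of removing `B` that leaves a relevant
position, and the sets removed by moves are convex for reachability, so paths between surviving
vertices survive a move. Hence two successive moves at `t` and `u` remove
`hull (cone t ∪ cone u)`, which is symmetric in `t` and `u`: moves commute, and a move whose cone
is already removed by another is absorbed by it. For `x ∈ L` and `y ∈ R`, removing
`Rmv x ∪ Rmv y` already leaves a relevant position, so after Right plays `y` the move `x` removes
no more than before. With these rules `G_y` is compared with every option of `G` by induction on
`|V(G)|`; reversing all arcs swaps the players and yields the statement for Right.
-/

namespace Influence.Pos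

open Relation Finset

variable {α : Type} [DecidableEq α] {G : Pos α} {S T A B P : Finset α} {a b c t u v w x y : α}
  {n : ℕ}

attribute [ext] Pos

def Reach (G : Pos α) : α → α → Prop := ReflTransGen fun a b => (a, b) ∈ G.A

lemma mem_Succ : v ∈ G.Succ u ↔ v ∈ G.V ∧ G.Reach u v := by
  simp only [Succ, mem_filter, Reach]

lemma mem_Pred : v ∈ G.Pred u ↔ v ∈ G.V ∧ G.Reach v u := by
  simp only [Pred, mem_filter, Reach]

lemma mem_R : u ∈ G.R ↔ u ∈ G.V ∧ u ∉ G.left := mem_sdiff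

lemma mem_ForcL : u ∈ G.ForcL ↔ u ∈ G.left ∧ G.Succ u ⊆ G.left := mem_filter

lemma mem_ForcR : u ∈ G.ForcR ↔ u ∈ G.R ∧ G.Pred u ⊆ G.R := mem_filter

lemma Relevant.eq_empty (h : G.Relevant) : G.Forc = ∅ := h

lemma mem_erase_A {p : α × α} :
    p ∈ (G.erase S).A ↔ p ∈ G.A ∧ p.1 ∈ G.V \ S ∧ p.2 ∈ G.V \ S := mem_filter

@[simp] lemma erase_V : (G.erase S).V = G.V \ S := rfl

@[simp] lemma erase_left : (G.erase S).left = G.left \ S := rfl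

@[simp] lemma erase_R : (G.erase S).R = G.R \ S := by
  ext; simp only [R, erase_V, erase_left, mem_sdiff]; tauto

lemma erase_erase (G : Pos α) (S T : Finset α) : (G.erase S).erase T = G.erase (S ∪ T) := by
  ext <;> simp only [erase, mem_sdiff, mem_filter, mem_union] <;> tauto

lemma WF.erase (hwf : G.WF) (S : Finset α) : (G.erase S).WF :=
  ⟨fun _ hp => (mem_erase_A.1 hp).2, sdiff_subset_sdiff hwf.2 subset_rfl⟩

lemma Reach.trans (hab : G.Reach a b) (hbc : G.Reach b c) : G.Reach a c :=
  ReflTransGen.trans hab hbc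

lemma Reach.of_erase (h : (G.erase S).Reach a b) : G.Reach a b :=
  ReflTransGen.mono (fun _ _ hp => (mem_erase_A.1 hp).1) _ _ h

lemma Reach.tgt_mem_V (hwf : G.WF) (h : G.Reach a b) (ha : a ∈ G.V) : b ∈ G.V := by
  rcases ReflTransGen.cases_tail h with rfl | ⟨_, _, hcb⟩
  exacts [ha, (hwf.1 _ hcb).2]

lemma Reach.src_mem_V (hwf : G.WF) (h : G.Reach a b) (hb : b ∈ G.V) : a ∈ G.V := by
  rcases ReflTransGen.cases_head h with rfl | ⟨_, hac, _⟩
  exacts [hb, (hwf.1 _ hac).1]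

lemma Succ_subset_V : G.Succ u ⊆ G.V := fun _ h => (mem_Succ.1 h).1

lemma Pred_subset_V : G.Pred u ⊆ G.V := fun _ h => (mem_Pred.1 h).1

lemma mem_Succ_self (hu : u ∈ G.V) : u ∈ G.Succ u := mem_Succ.2 ⟨hu, .refl⟩

lemma mem_Pred_self (hu : u ∈ G.V) : u ∈ G.Pred u := mem_Pred.2 ⟨hu, .refl⟩

lemma Succ_erase_subset : (G.erase S).Succ u ⊆ G.Succ u \ S := fun _ hv =>
  have ⟨hv, h⟩ := mem_Succ.1 hv
  mem_sdiff.2 ⟨mem_Succ.2 ⟨(mem_sdiff.1 hv).1, h.of_erase⟩, (mem_sdiff.1 hv).2⟩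

lemma Pred_erase_subset : (G.erase S).Pred u ⊆ G.Pred u \ S := fun _ hv =>
  have ⟨hv, h⟩ := mem_Pred.1 hv
  mem_sdiff.2 ⟨mem_Pred.2 ⟨(mem_sdiff.1 hv).1, h.of_erase⟩, (mem_sdiff.1 hv).2⟩

def rev (G : Pos α) : Pos α := ⟨G.V, G.A.image Prod.swap, G.R⟩

@[simp] lemma rev_V : G.rev.V = G.V := rfl

@[simp] lemma rev_left : G.rev.left = G.R := rfl

lemma rev_R (hwf : G.WF) : G.rev.R = G.left := Finset.sdiff_sdiff_eq_self hwf.2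

lemma mem_rev_A : (a, b) ∈ G.rev.A ↔ (b, a) ∈ G.A := by
  simp [rev]

lemma WF.rev (hwf : G.WF) : G.rev.WF :=
  ⟨fun _ hp => (hwf.1 _ (mem_rev_A.1 hp)).symm, sdiff_subset⟩

lemma reach_rev : G.rev.Reach a b ↔ G.Reach b a := by
  have : (fun a b => (a, b) ∈ G.rev.A) = Function.swap fun a b => (a, b) ∈ G.A := by
    funext a b; exact propext mem_rev_A
  unfold Reach
  rw [this, reflTransGen_swap]

lemma rev_Succ : G.rev.Succ u = G.Pred u := by
  ext; rw [mem_Succ, mem_Pred, reach_rev, rev_V]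

lemma rev_Pred : G.rev.Pred u = G.Succ u := by
  ext; rw [mem_Succ, mem_Pred, reach_rev, rev_V]

lemma rev_ForcL : G.rev.ForcL = G.ForcR := by
  ext; simp only [mem_ForcL, mem_ForcR, rev_left, rev_Succ]

lemma rev_ForcR (hwf : G.WF) : G.rev.ForcR = G.ForcL := by
  ext; simp only [mem_ForcL, mem_ForcR, rev_R hwf, rev_Pred]

lemma rev_Forc (hwf : G.WF) : G.rev.Forc = G.Forc := by
  rw [Forc, Forc, rev_ForcL, rev_ForcR hwf, union_comm]

lemma rev_erase : (G.erase S).rev = G.rev.erase S := by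
  refine Pos.ext rfl ?_ erase_R
  ext ⟨a, b⟩
  rw [mem_rev_A, mem_erase_A, mem_erase_A, mem_rev_A]
  simp only [rev_V]
  tauto

lemma relevant_iff : G.Relevant ↔ G.ForcL = ∅ ∧ G.rev.ForcL = ∅ := by
  rw [rev_ForcL]; exact union_eq_empty

/-- A path whose endpoints avoid `S` avoids `S` altogether. -/
def IsConvex (G : Pos α) (S : Finset α) : Prop :=
  ∀ ⦃a b c⦄, G.Reach a b → G.Reach b c → b ∈ S → a ∈ S ∨ c ∈ S

def IsUpClosed (G : Pos α) (S : Finset α) : Prop :=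
  ∀ ⦃a b⦄, G.Reach a b → a ∈ S → b ∈ S

def IsDownClosed (G : Pos α) (S : Finset α) : Prop :=
  ∀ ⦃a b⦄, G.Reach a b → b ∈ S → a ∈ S

lemma IsUpClosed.isConvex (h : G.IsUpClosed S) : G.IsConvex S :=
  fun _ _ _ _ hbc hb => .inr (h hbc hb)

lemma IsDownClosed.isConvex (h : G.IsDownClosed S) : G.IsConvex S :=
  fun _ _ _ hab _ hb => .inl (h hab hb)

lemma IsUpClosed.rev (h : G.IsUpClosed S) : G.rev.IsDownClosed S :=
  fun _ _ hab hb => h (reach_rev.1 hab) hb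

lemma IsDownClosed.rev (h : G.IsDownClosed S) : G.rev.IsUpClosed S :=
  fun _ _ hab ha => h (reach_rev.1 hab) ha

lemma IsConvex.union (hS : G.IsConvex S) (hT : G.IsConvex T) : G.IsConvex (S ∪ T) := by
  intro a b c hab hbc hb
  rcases mem_union.1 hb with hb | hb
  · exact (hS hab hbc hb).imp (mem_union_left _) (mem_union_left _)
  · exact (hT hab hbc hb).imp (mem_union_right _) (mem_union_right _)

lemma isUpClosed_Succ (hwf : G.WF) : G.IsUpClosed (G.Succ u) := fun _ _ hab ha =>
  mem_Succ.2 ⟨hab.tgt_mem_V hwf (mem_Succ.1 ha).1, (mem_Succ.1 ha).2.trans hab⟩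

lemma isDownClosed_Pred (hwf : G.WF) : G.IsDownClosed (G.Pred u) := fun _ _ hab hb =>
  mem_Pred.2 ⟨hab.src_mem_V hwf (mem_Pred.1 hb).1, hab.trans (mem_Pred.1 hb).2⟩

lemma IsConvex.reach_erase (hwf : G.WF) (hS : G.IsConvex S) (hab : G.Reach a b)
    (ha : a ∉ S) (hb : b ∉ S) : (G.erase S).Reach a b := by
  induction hab using ReflTransGen.head_induction_on with
  | refl => exact .refl
  | @head a c hac hcb ih =>
    have hc : c ∉ S := fun hc => (hS (.single hac) hcb hc).elim ha hb
    have ⟨haV, hcV⟩ := hwf.1 _ hac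
    exact .head (mem_erase_A.2 ⟨hac, mem_sdiff.2 ⟨haV, ha⟩, mem_sdiff.2 ⟨hcV, hc⟩⟩)
      (ih hc)

lemma IsConvex.union_erase (hwf : G.WF) (hB : G.IsConvex B) (hS : (G.erase B).IsConvex S) :
    G.IsConvex (B ∪ S) := by
  intro a b c hab hbc hb
  by_cases hb' : b ∈ B
  · exact (hB hab hbc hb').imp (mem_union_left _) (mem_union_left _)
  by_cases ha : a ∈ B
  · exact .inl (mem_union_left _ ha)
  by_cases hc : c ∈ B
  · exact .inr (mem_union_left _ hc)
  have hbS : b ∈ S := (mem_union.1 hb).resolve_left hb'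
  exact (hS (hB.reach_erase hwf hab ha hb') (hB.reach_erase hwf hbc hb' hc) hbS).imp
    (mem_union_right _) (mem_union_right _)

lemma IsConvex.Succ_erase (hwf : G.WF) (hS : G.IsConvex S) (hu : u ∉ S) :
    (G.erase S).Succ u = G.Succ u \ S := by
  refine Succ_erase_subset.antisymm fun v hv => ?_
  obtain ⟨⟨hvV, huv⟩, hvS⟩ := And.imp_left mem_Succ.1 (mem_sdiff.1 hv)
  exact mem_Succ.2 ⟨mem_sdiff.2 ⟨hvV, hvS⟩, hS.reach_erase hwf huv hu hvS⟩

lemma IsConvex.Pred_erase (hwf : G.WF) (hS : G.IsConvex S) (hu : u ∉ S) :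
    (G.erase S).Pred u = G.Pred u \ S := by
  refine Pred_erase_subset.antisymm fun v hv => ?_
  obtain ⟨⟨hvV, hvu⟩, hvS⟩ := And.imp_left mem_Pred.1 (mem_sdiff.1 hv)
  exact mem_Pred.2 ⟨mem_sdiff.2 ⟨hvV, hvS⟩, hS.reach_erase hwf hvu hvS hu⟩

lemma isUpClosed_ForcL (hwf : G.WF) : G.IsUpClosed G.ForcL := by
  intro a b hab ha
  obtain ⟨hal, haS⟩ := mem_ForcL.1 ha
  have hSb : G.Succ b ⊆ G.Succ a := fun _ hv =>
    mem_Succ.2 ⟨(mem_Succ.1 hv).1, hab.trans (mem_Succ.1 hv).2⟩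
  exact mem_ForcL.2 ⟨haS (mem_Succ.2 ⟨hab.tgt_mem_V hwf (hwf.2 hal), hab⟩), hSb.trans haS⟩

lemma isDownClosed_ForcR (hwf : G.WF) : G.IsDownClosed G.ForcR := by
  intro a b hab hb
  obtain ⟨hbR, hbP⟩ := mem_ForcR.1 hb
  have hPa : G.Pred a ⊆ G.Pred b := fun _ hv =>
    mem_Pred.2 ⟨(mem_Pred.1 hv).1, (mem_Pred.1 hv).2.trans hab⟩
  exact mem_ForcR.2 ⟨hbP (mem_Pred.2 ⟨hab.src_mem_V hwf (mem_R.1 hbR).1, hab⟩),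
    hPa.trans hbP⟩

lemma isConvex_Forc (hwf : G.WF) : G.IsConvex G.Forc :=
  (isUpClosed_ForcL hwf).isConvex.union (isDownClosed_ForcR hwf).isConvex

lemma Forc_subset_V (hwf : G.WF) : G.Forc ⊆ G.V :=
  union_subset (fun _ h => hwf.2 (mem_ForcL.1 h).1) fun _ h => (mem_R.1 (mem_ForcR.1 h).1).1

lemma mem_ForcR_of_notMem_left (h : u ∈ G.Forc) (hu : u ∉ G.left) : u ∈ G.ForcR :=
  (mem_union.1 h).resolve_left fun h' => hu (mem_ForcL.1 h').1

lemma notMem_Forc_of_reach (hwf : G.WF) (hvw : G.Reach v w) (hv : v ∈ G.left)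
    (hw : w ∉ G.left) : w ∉ G.Forc := fun h =>
  (mem_R.1 (mem_ForcR.1 (isDownClosed_ForcR hwf hvw (mem_ForcR_of_notMem_left h hw))).1).2 hv

lemma Forc_sdiff_subset : G.Forc \ T ⊆ (G.erase T).Forc := by
  intro u hu
  obtain ⟨hu, huT⟩ := mem_sdiff.1 hu
  rcases mem_union.1 hu with hu | hu
  · obtain ⟨hul, huS⟩ := mem_ForcL.1 hu
    refine mem_union_left _ (mem_ForcL.2 ⟨mem_sdiff.2 ⟨hul, huT⟩, ?_⟩)
    exact Succ_erase_subset.trans (sdiff_subset_sdiff huS subset_rfl)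
  · obtain ⟨huR, huP⟩ := mem_ForcR.1 hu
    refine mem_union_right _ (mem_ForcR.2 ?_)
    rw [erase_R]
    exact ⟨mem_sdiff.2 ⟨huR, huT⟩,
      Pred_erase_subset.trans (sdiff_subset_sdiff huP subset_rfl)⟩

lemma ForcL_erase_Forc (hwf : G.WF) : (G.erase G.Forc).ForcL = ∅ := by
  refine eq_empty_of_forall_notMem fun z hz => ?_
  obtain ⟨hzl, hzS⟩ := mem_ForcL.1 hz
  obtain ⟨hzl, hzF⟩ := mem_sdiff.1 hzl
  refine hzF (mem_union_left _ (mem_ForcL.2 ⟨hzl, fun w hw => ?_⟩))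
  by_cases hwF : w ∈ G.Forc
  · by_contra hwl
    exact notMem_Forc_of_reach hwf (mem_Succ.1 hw).2 hzl hwl hwF
  · rw [(isConvex_Forc hwf).Succ_erase hwf hzF] at hzS
    exact (mem_sdiff.1 (hzS (mem_sdiff.2 ⟨hw, hwF⟩))).1

lemma relevant_erase_Forc (hwf : G.WF) : (G.erase G.Forc).Relevant := by
  refine relevant_iff.2 ⟨ForcL_erase_Forc hwf, ?_⟩
  rw [rev_erase, ← rev_Forc hwf]
  exact ForcL_erase_Forc hwf.rev

lemma ForcR_erase_subset (hwf : G.WF) (hA : G.IsUpClosed A) : (G.erase A).ForcR ⊆ G.ForcR := by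
  intro y hy
  obtain ⟨hyR, hyP⟩ := mem_ForcR.1 hy
  rw [erase_R] at hyR hyP
  obtain ⟨hyR, hyA⟩ := mem_sdiff.1 hyR
  refine mem_ForcR.2 ⟨hyR, fun u hu => ?_⟩
  have huA : u ∉ A := fun huA => hyA (hA (mem_Pred.1 hu).2 huA)
  rw [hA.isConvex.Pred_erase hwf hyA] at hyP
  exact (mem_sdiff.1 (hyP (mem_sdiff.2 ⟨hu, huA⟩))).1

/-- The least superset of `B` whose removal leaves a relevant position. -/
noncomputable def hull (G : Pos α) (B : Finset α) : Finset α := B ∪ (G.erase B).Forc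

lemma subset_hull : B ⊆ G.hull B := subset_union_left

lemma relevant_erase_hull (hwf : G.WF) : (G.erase (G.hull B)).Relevant := by
  rw [hull, ← erase_erase]; exact relevant_erase_Forc (hwf.erase B)

lemma hull_subset (hBT : B ⊆ T) (hT : (G.erase T).Relevant) : G.hull B ⊆ T := by
  refine union_subset hBT fun f hf => by_contra fun hfT => ?_
  have := Forc_sdiff_subset (mem_sdiff.2 ⟨hf, hfT⟩)
  rw [erase_erase, union_eq_right.2 hBT, hT.eq_empty] at this
  exact notMem_empty _ this

lemma hull_mono (hwf : G.WF) (h : A ⊆ B) : G.hull A ⊆ G.hull B :=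
  hull_subset (h.trans subset_hull) (relevant_erase_hull hwf)

lemma hull_union_of_subset_hull (hwf : G.WF) (h : A ⊆ G.hull B) :
    G.hull (A ∪ B) = G.hull B :=
  (hull_subset (union_subset h subset_hull) (relevant_erase_hull hwf)).antisymm
    (hull_mono hwf subset_union_right)

lemma hull_hull_union (hwf : G.WF) : G.hull (G.hull A ∪ B) = G.hull (A ∪ B) :=
  (hull_subset
    (union_subset (hull_mono hwf subset_union_left) (subset_union_right.trans subset_hull))
    (relevant_erase_hull hwf)).antisymm
    (hull_mono hwf (union_subset_union subset_hull subset_rfl))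

lemma union_hull_erase : S ∪ (G.erase S).hull B = G.hull (S ∪ B) := by
  rw [hull, hull, erase_erase, union_assoc]

lemma hull_subset_V (hwf : G.WF) (hB : B ⊆ G.V) : G.hull B ⊆ G.V :=
  union_subset hB ((Forc_subset_V (hwf.erase B)).trans sdiff_subset)

lemma IsConvex.hull (hwf : G.WF) (hB : G.IsConvex B) : G.IsConvex (G.hull B) :=
  hB.union_erase hwf (isConvex_Forc (hwf.erase B))

lemma rev_hull (hwf : G.WF) : G.rev.hull B = G.hull B := by
  rw [hull, hull, ← rev_erase, rev_Forc (hwf.erase B)]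

noncomputable def cone (G : Pos α) (u : α) : Finset α :=
  if u ∈ G.left then G.Succ u else G.Pred u

lemma cone_of_mem_left (hu : u ∈ G.left) : G.cone u = G.Succ u := if_pos hu

lemma cone_of_notMem_left (hu : u ∉ G.left) : G.cone u = G.Pred u := if_neg hu

lemma Rmv_eq_hull : G.Rmv u = G.hull (G.cone u) := by
  unfold Rmv hull cone; split_ifs <;> rfl

lemma cone_subset_Rmv : G.cone u ⊆ G.Rmv u := by
  rw [Rmv_eq_hull]; exact subset_hull

lemma cone_subset_V : G.cone u ⊆ G.V := by
  unfold cone; split_ifs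
  exacts [Succ_subset_V, Pred_subset_V]

lemma isConvex_cone (hwf : G.WF) : G.IsConvex (G.cone u) := by
  unfold cone; split_ifs
  exacts [(isUpClosed_Succ hwf).isConvex, (isDownClosed_Pred hwf).isConvex]

lemma IsConvex.cone_erase (hwf : G.WF) (hS : G.IsConvex S) (hu : u ∉ S) :
    (G.erase S).cone u = G.cone u \ S := by
  simp only [cone, erase_left, mem_sdiff, hu, not_false_eq_true, and_true]
  split_ifs
  exacts [hS.Succ_erase hwf hu, hS.Pred_erase hwf hu]

lemma mem_Rmv_self (hu : u ∈ G.V) : u ∈ G.Rmv u := by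
  refine cone_subset_Rmv ?_
  unfold cone; split_ifs
  exacts [mem_Succ_self hu, mem_Pred_self hu]

lemma Rmv_subset_V (hwf : G.WF) : G.Rmv u ⊆ G.V := by
  rw [Rmv_eq_hull]; exact hull_subset_V hwf cone_subset_V

lemma isConvex_Rmv (hwf : G.WF) : G.IsConvex (G.Rmv u) := by
  rw [Rmv_eq_hull]; exact (isConvex_cone hwf).hull hwf

lemma move_eq : G.move u = G.erase (G.Rmv u) := rfl

lemma WF.move (hwf : G.WF) : (G.move u).WF := hwf.erase _

lemma relevant_move (hwf : G.WF) : (G.move u).Relevant := by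
  rw [move_eq, Rmv_eq_hull]; exact relevant_erase_hull hwf

@[simp] lemma mem_move_V : v ∈ (G.move u).V ↔ v ∈ G.V ∧ v ∉ G.Rmv u := mem_sdiff

@[simp] lemma mem_move_left : v ∈ (G.move u).left ↔ v ∈ G.left ∧ v ∉ G.Rmv u := mem_sdiff

@[simp] lemma mem_move_R : v ∈ (G.move u).R ↔ v ∈ G.R ∧ v ∉ G.Rmv u := by
  rw [move_eq, erase_R, mem_sdiff]

lemma card_move_le : (G.move u).V.card ≤ G.V.card := card_le_card sdiff_subset

lemma card_move_lt (hu : u ∈ G.V) : (G.move u).V.card < G.V.card :=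
  card_lt_card ⟨sdiff_subset, fun h => (mem_sdiff.1 (h hu)).2 (mem_Rmv_self hu)⟩

lemma Rmv_union_Rmv_move (hwf : G.WF) (hu : u ∉ G.Rmv t) :
    G.Rmv t ∪ (G.move t).Rmv u = G.hull (G.cone t ∪ G.cone u) := by
  rw [Rmv_eq_hull (G := G.move t), move_eq, (isConvex_Rmv hwf).cone_erase hwf hu,
    union_hull_erase, union_sdiff_self_eq_union, Rmv_eq_hull, hull_hull_union hwf]

lemma move_move (hwf : G.WF) (hu : u ∉ G.Rmv t) :
    (G.move t).move u = G.erase (G.hull (G.cone t ∪ G.cone u)) := by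
  rw [← Rmv_union_Rmv_move hwf hu, move_eq (G := G.move t), move_eq, erase_erase]

lemma move_comm (hwf : G.WF) (ht : t ∉ G.Rmv u) (hu : u ∉ G.Rmv t) :
    (G.move t).move u = (G.move u).move t := by
  rw [move_move hwf hu, move_move hwf ht, union_comm]

lemma move_move_of_cone_subset (hwf : G.WF) (hu : u ∉ G.Rmv t) (h : G.cone t ⊆ G.Rmv u) :
    (G.move t).move u = G.move u := by
  rw [move_move hwf hu, hull_union_of_subset_hull hwf (by rwa [← Rmv_eq_hull]), ← Rmv_eq_hull,
    move_eq]

lemma Rmv_subset_Rmv_of_cone_subset (hwf : G.WF) (h : G.cone u ⊆ G.Rmv t) :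
    G.Rmv u ⊆ G.Rmv t := by
  rw [Rmv_eq_hull (u := u)]; exact hull_subset h (relevant_move hwf)

lemma Rmv_move_subset (hwf : G.WF) (hu : u ∉ G.Rmv t)
    (hT : (G.erase (G.Rmv t ∪ G.Rmv u)).Relevant) : (G.move t).Rmv u ⊆ G.Rmv u := by
  intro v hv
  have hv' : v ∈ G.hull (G.cone t ∪ G.cone u) :=
    Rmv_union_Rmv_move hwf hu ▸ mem_union_right _ hv
  have := hull_subset (union_subset_union cone_subset_Rmv cone_subset_Rmv) hT hv'
  exact (mem_union.1 this).resolve_left (mem_move_V.1 (Rmv_subset_V hwf.move hv)).2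

lemma ForcL_erase_hull_union (hwf : G.WF) (hA : G.IsConvex A) (hP : G.IsDownClosed P) :
    (G.erase (G.hull A ∪ G.hull P)).ForcL = ∅ := by
  refine eq_empty_of_forall_notMem fun z hz => ?_
  obtain ⟨hzl, hzS⟩ := mem_ForcL.1 hz
  obtain ⟨hzl, hzT⟩ := mem_sdiff.1 hzl
  obtain ⟨hzA, hzP⟩ := notMem_union.1 hzT
  -- As `z` is not forced in `G ∖ A`, it reaches a Right vertex `w` there; `w` escapes both hulls.
  obtain ⟨w, hw, hwl⟩ : ∃ w ∈ (G.erase A).Succ z, w ∉ G.left := by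
    have hzF : z ∉ (G.erase A).ForcL := fun h => hzA (mem_union_right _ (mem_union_left _ h))
    rw [mem_ForcL, not_and] at hzF
    obtain ⟨w, hw, hwl⟩ :=
      not_subset.1 (hzF (mem_sdiff.2 ⟨hzl, fun h => hzA (subset_hull h)⟩))
    exact ⟨w, hw, fun h => hwl (mem_sdiff.2 ⟨h, (mem_sdiff.1 (Succ_subset_V hw)).2⟩)⟩
  obtain ⟨hwV, hzw⟩ := mem_Succ.1 hw
  obtain ⟨hwV, hwA⟩ := mem_sdiff.1 hwV
  have hzP' : z ∉ P := fun h => hzP (subset_hull h)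
  have hwP : w ∉ P := fun h => hzP' (hP hzw.of_erase h)
  have hwT : w ∉ G.hull A ∪ G.hull P := by
    refine notMem_union.2 ⟨notMem_union.2 ⟨hwA, ?_⟩, notMem_union.2 ⟨hwP, ?_⟩⟩
    · exact notMem_Forc_of_reach (hwf.erase A) hzw
        (mem_sdiff.2 ⟨hzl, fun h => hzA (subset_hull h)⟩) fun h => hwl (mem_sdiff.1 h).1
    · exact notMem_Forc_of_reach (hwf.erase P) (hP.isConvex.reach_erase hwf hzw.of_erase hzP' hwP)
        (mem_sdiff.2 ⟨hzl, hzP'⟩) fun h => hwl (mem_sdiff.1 h).1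
  have hT : G.IsConvex (G.hull A ∪ G.hull P) := (hA.hull hwf).union (hP.isConvex.hull hwf)
  exact hwl (mem_sdiff.1 (hzS (mem_Succ.2
    ⟨mem_sdiff.2 ⟨hwV, hwT⟩, hT.reach_erase hwf hzw.of_erase hzT hwT⟩))).1

lemma relevant_erase_hull_union (hwf : G.WF) (hA : G.IsUpClosed A) (hP : G.IsDownClosed P) :
    (G.erase (G.hull A ∪ G.hull P)).Relevant := by
  refine relevant_iff.2 ⟨ForcL_erase_hull_union hwf hA.isConvex hP, ?_⟩
  rw [rev_erase, ← rev_hull hwf, ← rev_hull hwf, union_comm]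
  exact ForcL_erase_hull_union hwf.rev hP.rev.isConvex hA.rev

lemma relevant_erase_Rmv_union (hwf : G.WF) (hx : x ∈ G.left) (hy : y ∉ G.left) :
    (G.erase (G.Rmv x ∪ G.Rmv y)).Relevant := by
  rw [Rmv_eq_hull, Rmv_eq_hull, cone_of_mem_left hx, cone_of_notMem_left hy]
  exact relevant_erase_hull_union hwf (isUpClosed_Succ hwf) (isDownClosed_Pred hwf)

lemma mem_Rmv_of_mem_Rmv (hwf : G.WF) (hrel : G.Relevant) (hx : x ∈ G.left) (hy : y ∉ G.left)
    (h : y ∈ G.Rmv x) : x ∈ G.Rmv y := by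
  rw [Rmv_eq_hull, cone_of_mem_left hx, hull] at h
  rcases mem_union.1 h with h | h
  · refine cone_subset_Rmv ?_
    rw [cone_of_notMem_left hy]
    exact mem_Pred.2 ⟨hwf.2 hx, (mem_Succ.1 h).2⟩
  · have := ForcR_erase_subset hwf (isUpClosed_Succ hwf)
      (mem_ForcR_of_notMem_left h fun h' => hy (mem_sdiff.1 h').1)
    exact absurd (mem_union_right _ this) (hrel.eq_empty ▸ notMem_empty y)

lemma Pred_subset_hull (hwf : G.WF) (hP : G.IsDownClosed P) (hy : y ∉ G.left)
    (h : y ∈ G.hull P) : G.Pred y ⊆ G.hull P := by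
  intro u hu
  have huy := (mem_Pred.1 hu).2
  by_cases huP : u ∈ P
  · exact subset_hull huP
  rcases mem_union.1 h with hyP | hyF
  · exact absurd (hP huy hyP) huP
  have hyF := mem_ForcR_of_notMem_left hyF fun h' => hy (mem_sdiff.1 h').1
  have hyP : y ∉ P := (mem_sdiff.1 (Forc_subset_V (hwf.erase P) (mem_union_right _ hyF))).2
  exact mem_union_right _ (mem_union_right _
    (isDownClosed_ForcR (hwf.erase P) (hP.isConvex.reach_erase hwf huy huP hyP) hyF))

lemma cone_subset_Rmv_of_mem_Rmv (hwf : G.WF) (ht : t ∉ G.left) (hu : u ∉ G.left)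
    (h : u ∈ G.Rmv t) : G.cone u ⊆ G.Rmv t := by
  rw [Rmv_eq_hull, cone_of_notMem_left ht] at h ⊢
  rw [cone_of_notMem_left hu]
  exact Pred_subset_hull hwf (isDownClosed_Pred hwf) hu h

lemma sAux_succ (k : ℕ) (G : Pos α) (hwf : G.WF) (hk : G.V.card ≤ k) :
    sL1Aux (k + 1) G = sL1Aux k G ∧ sL2Aux (k + 1) G = sL2Aux k G := by
  induction k generalizing G with
  | zero =>
    have hV : G.V = ∅ := card_eq_zero.1 (Nat.le_zero.1 hk)
    have hl : ¬ G.left.Nonempty := fun ⟨x, hx⟩ => notMem_empty x (hV ▸ hwf.2 hx)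
    have hR : ¬ G.R.Nonempty := fun ⟨y, hy⟩ => notMem_empty y (hV ▸ (mem_R.1 hy).1)
    simp [sL1Aux, sL2Aux, hl, hR]
  | succ k ih =>
    have ih' : ∀ u ∈ G.V, _ := fun u hu =>
      ih (G.move u) hwf.move (Nat.lt_succ_iff.1 ((card_move_lt hu).trans_le hk))
    constructor
    · rw [sL1Aux, sL1Aux]
      congr 1
      exact sup_congr rfl fun x hx => by rw [(ih' x (hwf.2 hx)).2]
    · rw [sL2Aux, sL2Aux]
      split_ifs with h
      · exact inf'_congr h rfl fun y hy => (ih' y (mem_R.1 hy).1).1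
      · rfl

lemma sAux_eq_of_card_le {k : ℕ} (hwf : G.WF) (hk : G.V.card ≤ k) :
    sL1Aux k G = G.sL1 ∧ sL2Aux k G = G.sL2 := by
  induction k, hk using Nat.le_induction with
  | base => exact ⟨rfl, rfl⟩
  | succ k hk ih => rwa [(sAux_succ k G hwf hk).1, (sAux_succ k G hwf hk).2]

lemma sL1_eq (hwf : G.WF) : G.sL1 =
    if G.left.Nonempty then G.left.sup fun x => (G.Rmv x).card + (G.move x).sL2 else 0 := by
  rw [← (sAux_eq_of_card_le hwf (Nat.le_succ _)).1, sL1Aux]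
  congr 1
  exact sup_congr rfl fun x _ => by rw [(sAux_eq_of_card_le hwf.move card_move_le).2]

lemma sL2_eq (hwf : G.WF) : G.sL2 =
    if h : G.R.Nonempty then G.R.inf' h fun y => (G.move y).sL1 else 0 := by
  rw [← (sAux_eq_of_card_le hwf (Nat.le_succ _)).2, sL2Aux]
  split_ifs with h
  · exact inf'_congr h rfl fun y _ => (sAux_eq_of_card_le hwf.move card_move_le).1
  · rfl

lemma le_sL1 (hwf : G.WF) (hx : x ∈ G.left) : (G.Rmv x).card + (G.move x).sL2 ≤ G.sL1 := by
  rw [sL1_eq hwf, if_pos ⟨x, hx⟩]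
  exact le_sup (f := fun x => (G.Rmv x).card + (G.move x).sL2) hx

lemma sL1_le (hwf : G.WF) (h : ∀ x ∈ G.left, (G.Rmv x).card + (G.move x).sL2 ≤ n) :
    G.sL1 ≤ n := by
  rw [sL1_eq hwf]
  split_ifs
  exacts [Finset.sup_le h, Nat.zero_le n]

lemma sL2_le (hwf : G.WF) (hy : y ∈ G.R) : G.sL2 ≤ (G.move y).sL1 := by
  rw [sL2_eq hwf, dif_pos ⟨y, hy⟩]
  exact inf'_le _ hy

lemma le_sL2 (hwf : G.WF) (hne : G.R.Nonempty) (h : ∀ y ∈ G.R, n ≤ (G.move y).sL1) :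
    n ≤ G.sL2 := by
  rw [sL2_eq hwf, dif_pos hne]
  exact le_inf' _ _ h

lemma Relevant.rev (hwf : G.WF) (h : G.Relevant) : G.rev.Relevant := by
  unfold Relevant; rw [rev_Forc hwf]; exact h

lemma rev_cone (hu : u ∈ G.V) : G.rev.cone u = G.cone u := by
  by_cases hul : u ∈ G.left
  · rw [cone_of_notMem_left fun h => (mem_R.1 h).2 hul, rev_Pred, cone_of_mem_left hul]
  · rw [cone_of_mem_left (mem_R.2 ⟨hu, hul⟩), rev_Succ, cone_of_notMem_left hul]

lemma rev_Rmv (hwf : G.WF) (hu : u ∈ G.V) : G.rev.Rmv u = G.Rmv u := by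
  rw [Rmv_eq_hull, Rmv_eq_hull, rev_hull hwf, rev_cone hu]

lemma rev_move (hwf : G.WF) (hu : u ∈ G.V) : G.rev.move u = (G.move u).rev := by
  rw [move_eq, move_eq, rev_erase, rev_Rmv hwf hu]

lemma rev_sAux (k : ℕ) (G : Pos α) (hwf : G.WF) :
    sL1Aux k G.rev = sR1Aux k G ∧ sL2Aux k G.rev = sR2Aux k G := by
  induction k generalizing G with
  | zero => exact ⟨rfl, rfl⟩
  | succ k ih =>
    constructor
    · rw [sL1Aux, sR1Aux, rev_left]
      congr 1
      refine sup_congr rfl fun y hy => ?_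
      rw [rev_Rmv hwf (mem_R.1 hy).1, rev_move hwf (mem_R.1 hy).1, (ih _ hwf.move).2]
    · rw [sL2Aux, sR2Aux]
      have hR := rev_R hwf
      split_ifs with h₁ h₂ h₂
      · refine inf'_congr h₁ hR fun x hx => ?_
        rw [rev_move hwf (hwf.2 (hR ▸ hx)), (ih _ hwf.move).1]
      · exact absurd (hR ▸ h₁) h₂
      · exact absurd (hR ▸ h₂) h₁
      · rfl

lemma rev_sL1 (hwf : G.WF) : G.rev.sL1 = G.sR1 := (rev_sAux _ G hwf).1

lemma rev_sL2 (hwf : G.WF) : G.rev.sL2 = G.sR2 := (rev_sAux _ G hwf).2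

def RMoveLE (G : Pos α) : Prop :=
  ∀ y ∈ G.R, (G.move y).sL1 ≤ G.sL1 ∧ (G.move y).sL2 ≤ G.sL2

lemma RMoveLE.sL2_le_sL1 (hwf : G.WF) (h : G.RMoveLE) : G.sL2 ≤ G.sL1 := by
  rcases G.R.eq_empty_or_nonempty with hR | ⟨y, hy⟩
  · rw [sL2_eq hwf, dif_neg (not_nonempty_iff_eq_empty.2 hR)]; exact Nat.zero_le _
  · exact (sL2_le hwf hy).trans (h y hy).1

lemma sL1_move_le (hwf : G.WF) (hrel : G.Relevant) (ih : ∀ u ∈ G.V, (G.move u).RMoveLE)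
    (hy : y ∈ G.R) : (G.move y).sL1 ≤ G.sL1 := by
  have hyl := (mem_R.1 hy).2
  refine sL1_le hwf.move fun x hx => ?_
  obtain ⟨hxl, hxy⟩ := mem_move_left.1 hx
  have hyx : y ∉ G.Rmv x := fun h => hxy (mem_Rmv_of_mem_Rmv hwf hrel hxl hyl h)
  have hRmv : (G.move y).Rmv x ⊆ G.Rmv x := Rmv_move_subset hwf hxy
    (union_comm (G.Rmv x) _ ▸ relevant_erase_Rmv_union hwf hxl hyl)
  calc ((G.move y).Rmv x).card + ((G.move y).move x).sL2
      = ((G.move y).Rmv x).card + ((G.move x).move y).sL2 := by rw [move_comm hwf hyx hxy]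
    _ ≤ (G.Rmv x).card + (G.move x).sL2 :=
        add_le_add (card_le_card hRmv) (ih x (hwf.2 hxl) y (mem_move_R.2 ⟨hy, hyx⟩)).2
    _ ≤ G.sL1 := le_sL1 hwf hxl

lemma sL2_move_le (hwf : G.WF) (ih : ∀ u ∈ G.V, (G.move u).RMoveLE) (hy : y ∈ G.R) :
    (G.move y).sL2 ≤ G.sL2 := by
  have hyl := (mem_R.1 hy).2
  refine le_sL2 hwf ⟨y, hy⟩ fun y' hy' => ?_
  obtain ⟨hy'V, hy'l⟩ := mem_R.1 hy'
  have hQ : (G.move y').sL2 ≤ (G.move y').sL1 := (ih y' hy'V).sL2_le_sL1 hwf.move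
  by_cases h₁ : y' ∈ G.Rmv y <;> by_cases h₂ : y ∈ G.Rmv y'
  · have : G.Rmv y = G.Rmv y' :=
      (Rmv_subset_Rmv_of_cone_subset hwf (cone_subset_Rmv_of_mem_Rmv hwf hy'l hyl h₂)).antisymm
        (Rmv_subset_Rmv_of_cone_subset hwf (cone_subset_Rmv_of_mem_Rmv hwf hyl hy'l h₁))
    rw [move_eq, this]
    exact hQ
  · rw [← move_move_of_cone_subset hwf h₂ (cone_subset_Rmv_of_mem_Rmv hwf hyl hy'l h₁)]
    exact (ih y' hy'V y (mem_move_R.2 ⟨hy, h₂⟩)).2.trans hQ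
  · rw [← move_move_of_cone_subset hwf h₁ (cone_subset_Rmv_of_mem_Rmv hwf hy'l hyl h₂)]
    exact sL2_le hwf.move (mem_move_R.2 ⟨hy', h₁⟩)
  · calc (G.move y).sL2 ≤ ((G.move y).move y').sL1 :=
          sL2_le hwf.move (mem_move_R.2 ⟨hy', h₁⟩)
      _ = ((G.move y').move y).sL1 := by rw [move_comm hwf h₂ h₁]
      _ ≤ (G.move y').sL1 := (ih y' hy'V y (mem_move_R.2 ⟨hy, h₂⟩)).1

theorem RMoveLE.of_relevant (hwf : G.WF) (hrel : G.Relevant) : G.RMoveLE := by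
  induction hn : G.V.card using Nat.strong_induction_on generalizing G with
  | _ n ih =>
    have ih' : ∀ u ∈ G.V, (G.move u).RMoveLE := fun u hu =>
      ih _ (hn ▸ card_move_lt hu) hwf.move (relevant_move hwf) rfl
    exact fun y hy => ⟨sL1_move_le hwf hrel ih' hy, sL2_move_le hwf ih' hy⟩

end Influence.Pos

open Influence Influence.Pos Finset

/-- a move of the opponent cannot increase a player's score. -/
theorem influence_move_score_le {α : Type} [DecidableEq α] (G : Pos α)
    (hwf : G.WF) (hrel : G.Relevant) :
    (∀ y ∈ G.R, (G.move y).sL1 ≤ G.sL1 ∧ (G.move y).sL2 ≤ G.sL2) ∧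
    (∀ x ∈ G.left, (G.move x).sR1 ≤ G.sR1 ∧ (G.move x).sR2 ≤ G.sR2) := by
  refine ⟨RMoveLE.of_relevant hwf hrel, fun x hx => ?_⟩
  have h := RMoveLE.of_relevant hwf.rev (hrel.rev hwf) x (rev_R hwf ▸ hx)
  rwa [rev_move hwf (hwf.2 hx), rev_sL1 hwf.move, rev_sL1 hwf, rev_sL2 hwf.move,
    rev_sL2 hwf] at h
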